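/- Gaussian stability under normal distortion (tail case): Let μ ∈ ℝ, σ > 0, p₀ ∈ (0,1), γ ∈ (0,1]. Let F̄(x) = 1 − Φ((x−μ)/σ) be the tail (survival) function of a Gaussian with mean μ and standard deviation σ. Then for all x ∈ ℝ, w_{p₀,γ}(F̄(x)) = 1 − Φ((x − μ̃)/σ̂), where μ̃ = μ + σ(γ⁻¹ − 1)Φ⁻¹(p₀) and σ̂ = σ/γ. That is, the distorted tail function is the tail function of a Gaussian with mean μ̃ and standard deviation σ̂. -/

import Mathlib

/-! Since `1 - Φ y = Φ (-y)` and `Φ` is injective (so `Φ⁻¹ ∘ Φ = id`), the distortion sends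
`Φ y` to `Φ (γ y + (1 - γ) Φ⁻¹ p₀)`. Applied to `y = -(x - μ) / σ` this is `Φ` of an affine
function of `x` with slope `-γ / σ`, i.e. the tail of a Gaussian with standard deviation `σ / γ`. -/

open Real MeasureTheory ProbabilityTheory Set Filter

/-- Standard normal CDF. -/
noncomputable def Phi (x : ℝ) : ℝ :=
  ∫ t in Set.Iic x, Real.exp (-t ^ 2 / 2) / Real.sqrt (2 * Real.pi)

/-- Standard normal quantile function (inverse of `Phi`). -/
noncomputable def PhiInv : ℝ → ℝ := Function.invFun Phi

/-- Standard normal density. -/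
noncomputable def ndens (x : ℝ) : ℝ :=
  Real.exp (-x ^ 2 / 2) / Real.sqrt (2 * Real.pi)

/-- Normal distortion function. -/
noncomputable def wdist (p₀ γ p : ℝ) : ℝ :=
  Phi (γ * PhiInv p + (1 - γ) * PhiInv p₀)

lemma ndens_eq_gaussianPDFReal : ndens = gaussianPDFReal 0 1 := by
  ext x
  simp [ndens, gaussianPDFReal, div_eq_inv_mul]

lemma ndens_pos (x : ℝ) : 0 < ndens x := by
  rw [ndens_eq_gaussianPDFReal]
  exact gaussianPDFReal_pos 0 1 x one_ne_zero

lemma integrable_ndens : Integrable ndens :=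
  ndens_eq_gaussianPDFReal ▸ integrable_gaussianPDFReal 0 1

lemma integral_ndens : ∫ x, ndens x = 1 :=
  ndens_eq_gaussianPDFReal ▸ integral_gaussianPDFReal_eq_one 0 one_ne_zero

lemma Phi_eq_setIntegral_ndens (x : ℝ) : Phi x = ∫ t in Iic x, ndens t := rfl

lemma Phi_add_setIntegral_Ioc {a b : ℝ} (hab : a ≤ b) :
    Phi a + ∫ t in Ioc a b, ndens t = Phi b := by
  rw [Phi_eq_setIntegral_ndens, Phi_eq_setIntegral_ndens,
    ← setIntegral_union (Iic_disjoint_Ioc le_rfl) measurableSet_Ioc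
      integrable_ndens.integrableOn integrable_ndens.integrableOn,
    Iic_union_Ioc_eq_Iic hab]

lemma Phi_strictMono : StrictMono Phi := by
  intro a b hab
  have hpos : 0 < ∫ t in Ioc a b, ndens t := by
    rw [← intervalIntegral.integral_of_le hab.le]
    exact intervalIntegral.intervalIntegral_pos_of_pos
      integrable_ndens.intervalIntegrable ndens_pos hab
  linarith [Phi_add_setIntegral_Ioc hab.le]

lemma Phi_neg (x : ℝ) : Phi (-x) = 1 - Phi x := by
  have h_tail : Phi (-x) = ∫ t in Ioi x, ndens t := by
    rw [Phi_eq_setIntegral_ndens, ← integral_comp_neg_Ioi]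
    simp only [ndens, neg_sq]
  rw [h_tail, ← integral_ndens, ← intervalIntegral.integral_Iic_add_Ioi
    integrable_ndens.integrableOn integrable_ndens.integrableOn, Phi_eq_setIntegral_ndens]
  ring

lemma PhiInv_Phi (x : ℝ) : PhiInv (Phi x) = x :=
  Function.leftInverse_invFun Phi_strictMono.injective x

lemma wdist_Phi (p₀ γ y : ℝ) : wdist p₀ γ (Phi y) = Phi (γ * y + (1 - γ) * PhiInv p₀) := by
  rw [wdist, PhiInv_Phi]

theorem stmt8_general (μ σ p₀ γ : ℝ) (hσ : 0 < σ)
    (hγ : γ ∈ Set.Ioc (0:ℝ) 1) :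
    ∀ x : ℝ,
      wdist p₀ γ (1 - Phi ((x - μ) / σ)) =
        1 - Phi ((x - (μ + σ * (γ⁻¹ - 1) * PhiInv p₀)) / (σ / γ)) := by
  intro x
  rw [← Phi_neg, ← Phi_neg, wdist_Phi]
  congr 1
  field_simp [hσ.ne', hγ.1.ne']
  ring

theorem stmt8 (μ σ p₀ γ : ℝ) (hσ : 0 < σ)
    (hp₀ : p₀ ∈ Set.Ioo (0:ℝ) 1) (hγ : γ ∈ Set.Ioc (0:ℝ) 1) :
    ∀ x : ℝ,
      wdist p₀ γ (1 - Phi ((x - μ) / σ)) =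
        1 - Phi ((x - (μ + σ * (γ⁻¹ - 1) * PhiInv p₀)) / (σ / γ)) :=
  stmt8_general μ σ p₀ γ hσ hγ
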